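/- arXiv:0805.3323 — 5 statements merged into one kernel-verified Lean document; each statement's English description precedes it below -/
import Mathlib

section
/- Let X be a continuum (a nonempty compact connected metric space), let N be a positive integer, and let a_1, …, a_N ∈ X be points such that X is irreducible about the set {a_1, …, a_N}, i.e., no proper subcontinuum of X contains all of a_1, …, a_N. Then for every subcontinuum Y of X, the set X ∖ Y has at most N connected components. -/
/-!
Boundary bumping: in a compact connected Hausdorff space, the closure of every component of a
proper open subset meets its complement. Hence if `Y` is a subcontinuum, `Y` together with the
closures of the components of `X \ Y` that contain one of the points `a i` is a subcontinuum
containing every `a i`, so by irreducibility it is all of `X`. As a component of `X \ Y` is closed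
in `X \ Y`, every component of `X \ Y` is therefore the component of some `a i`.
-/

open Set Topology

section

variable {Z : Type*} [TopologicalSpace Z]

theorem closure_connectedComponentIn_inter_subset (F : Set Z) (x : Z) :
    closure (connectedComponentIn F x) ∩ F ⊆ connectedComponentIn F x := by
  rintro z ⟨hz, hzF⟩
  have hxF : x ∈ F := by
    by_contra hxF
    simp [connectedComponentIn_eq_empty hxF] at hz
  have hpre : IsPreconnected (insert z (connectedComponentIn F x)) :=
    isPreconnected_connectedComponentIn.subset_closure (subset_insert _ _)
      (insert_subset hz subset_closure)
  exact hpre.subset_connectedComponentIn (mem_insert_of_mem _ (mem_connectedComponentIn hxF))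
    (insert_subset hzF (connectedComponentIn_subset F x)) (mem_insert z _)

theorem encard_connectedComponentIn_le {ι : Type*} {U : Set Z} (a : ι → Z)
    (h : ∀ x ∈ U, ∃ i, x ∈ connectedComponentIn U (a i)) :
    {C : Set Z | ∃ x ∈ U, C = connectedComponentIn U x}.encard ≤ ENat.card ι := by
  have hsub : {C : Set Z | ∃ x ∈ U, C = connectedComponentIn U x} ⊆
      (fun i => connectedComponentIn U (a i)) '' univ := by
    rintro C ⟨x, hx, rfl⟩
    obtain ⟨i, hi⟩ := h x hx
    exact ⟨i, mem_univ i, connectedComponentIn_eq hi⟩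
  calc _ ≤ _ := encard_mono hsub
    _ ≤ (univ : Set ι).encard := encard_image_le _ _
    _ = ENat.card ι := encard_univ ι

theorem IsClopen.image_val_of_subset_isOpen {A V : Set Z} (hA : IsClosed A) (hV : IsOpen V)
    (hVA : V ⊆ A) {W : Set A} (hW : IsClopen W) (hWV : W ⊆ Subtype.val ⁻¹' V) :
    IsClopen (Subtype.val '' W) := by
  refine ⟨hA.isClosedMap_subtype_val _ hW.isClosed, ?_⟩
  obtain ⟨O, hO, rfl⟩ := isOpen_induced_iff.mp hW.isOpen
  have hAO : A ∩ O = V ∩ O := by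
    ext z
    exact ⟨fun ⟨hzA, hzO⟩ => ⟨hWV (show (⟨z, hzA⟩ : A) ∈ Subtype.val ⁻¹' O from hzO), hzO⟩,
      fun ⟨hzV, hzO⟩ => ⟨hVA hzV, hzO⟩⟩
  rw [Subtype.image_preimage_coe, hAO]
  exact hV.inter hO

section CompactT2

variable [T2Space Z] [CompactSpace Z]

theorem exists_isClopen_of_connectedComponent_subset {x : Z} {U : Set Z} (hU : IsOpen U)
    (h : connectedComponent x ⊆ U) : ∃ W, IsClopen W ∧ x ∈ W ∧ W ⊆ U := by
  have : Nonempty {s : Set Z // IsClopen s ∧ x ∈ s} := ⟨⟨univ, isClopen_univ, mem_univ x⟩⟩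
  have hdir : Directed (· ⊇ ·) fun s : {s : Set Z // IsClopen s ∧ x ∈ s} => s.val := by
    rintro ⟨s, hs, hxs⟩ ⟨t, ht, hxt⟩
    exact ⟨⟨s ∩ t, hs.inter ht, hxs, hxt⟩, inter_subset_left, inter_subset_right⟩
  obtain ⟨⟨W, hW, hxW⟩, hWU⟩ := exists_subset_nhds_of_compactSpace hdir
    (fun s => s.2.1.isClosed) fun y hy =>
      hU.mem_nhds (h ((connectedComponent_eq_iInter_isClopen x).symm ▸ hy))
  exact ⟨W, hW, hxW, hWU⟩

variable [PreconnectedSpace Z]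

/-- Boundary bumping. -/
theorem IsOpen.eq_univ_of_closure_connectedComponentIn_subset {U : Set Z} (hU : IsOpen U)
    {x : Z} (hx : x ∈ U) (h : closure (connectedComponentIn U x) ⊆ U) : U = univ := by
  obtain ⟨V, hVo, hCV, hVU⟩ := normal_exists_closure_subset isClosed_closure hU h
  have : CompactSpace (closure V) := isCompact_iff_compactSpace.mp isClosed_closure.isCompact
  let x' : closure V := ⟨x, subset_closure (hCV (subset_closure (mem_connectedComponentIn hx)))⟩
  -- The component of `x` in `closure V ⊆ U` lies in the component of `x` in `U`, hence in `V`.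
  have hcomp : connectedComponent x' ⊆ Subtype.val ⁻¹' V := by
    intro z hz
    have hzU : (z : Z) ∈ connectedComponentIn U x :=
      (isPreconnected_connectedComponent.image _ continuous_subtype_val.continuousOn
        ).subset_connectedComponentIn ⟨x', mem_connectedComponent, rfl⟩
        (image_subset_iff.2 fun w _ => hVU w.2) ⟨z, hz, rfl⟩
    exact hCV (subset_closure hzU)
  obtain ⟨W, hW, hxW, hWV⟩ :=
    exists_isClopen_of_connectedComponent_subset (hVo.preimage continuous_subtype_val) hcomp
  have hWuniv : Subtype.val '' W = univ :=
    (hW.image_val_of_subset_isOpen isClosed_closure hVo subset_closure hWV).eq_univ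
      ⟨x, x', hxW, rfl⟩
  exact eq_univ_of_univ_subset
    (hWuniv ▸ (image_subset_iff.2 hWV).trans (subset_closure.trans hVU))

theorem IsConnected.isPreconnected_union_closure_connectedComponentIn_compl {Y : Set Z}
    (hY : IsConnected Y) (hYc : IsClosed Y) (z : Z) :
    IsPreconnected (Y ∪ closure (connectedComponentIn Yᶜ z)) := by
  by_cases hz : z ∈ Yᶜ
  · obtain ⟨y, hyC, hyY⟩ : (closure (connectedComponentIn Yᶜ z) ∩ Y).Nonempty := by
      by_contra hne
      refine hY.nonempty.ne_empty (compl_univ_iff.mp ?_)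
      exact hYc.isOpen_compl.eq_univ_of_closure_connectedComponentIn_subset hz
        fun w hw hwY => hne ⟨w, hw, hwY⟩
    exact hY.isPreconnected.union y hyY hyC isPreconnected_connectedComponentIn.closure
  · simpa [connectedComponentIn_eq_empty hz] using hY.isPreconnected

theorem exists_mem_connectedComponentIn_compl_of_irreducible {ι : Type*} [Finite ι]
    (a : ι → Z) (hirr : ∀ K : Set Z, IsCompact K → IsConnected K → range a ⊆ K → K = univ)
    {Y : Set Z} (hY : IsConnected Y) (hYc : IsClosed Y) {x : Z} (hx : x ∈ Yᶜ) :
    ∃ i, x ∈ connectedComponentIn Yᶜ (a i) := by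
  set K := Y ∪ ⋃ i, closure (connectedComponentIn Yᶜ (a i))
  obtain ⟨y, hy⟩ := hY.nonempty
  have hKconn : IsConnected K := by
    refine ⟨⟨y, Or.inl hy⟩, isPreconnected_of_forall y fun w hw => ?_⟩
    rcases hw with hwY | hw
    · exact ⟨Y, subset_union_left, hy, hwY, hY.isPreconnected⟩
    · obtain ⟨i, hi⟩ := mem_iUnion.mp hw
      exact ⟨_, union_subset_union_right Y (subset_iUnion_of_subset i subset_rfl), Or.inl hy,
        Or.inr hi, hY.isPreconnected_union_closure_connectedComponentIn_compl hYc (a i)⟩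
  have hKcomp : IsCompact K :=
    hYc.isCompact.union (isCompact_iUnion fun _ => isClosed_closure.isCompact)
  have hrange : range a ⊆ K := by
    rintro _ ⟨i, rfl⟩
    by_cases hi : a i ∈ Y
    · exact Or.inl hi
    · exact Or.inr (mem_iUnion_of_mem i (subset_closure (mem_connectedComponentIn hi)))
  have hxK : x ∈ K := hirr K hKcomp hKconn hrange ▸ mem_univ x
  obtain ⟨i, hi⟩ := mem_iUnion.mp (hxK.resolve_left hx)
  exact ⟨i, closure_connectedComponentIn_inter_subset _ _ ⟨hi, hx⟩⟩

end CompactT2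

end

theorem stmt_0_general (X : Type*) [MetricSpace X] [CompactSpace X] [ConnectedSpace X]
    (N : ℕ) (a : Fin N → X)
    (hirr : ∀ K : Set X, IsCompact K → IsConnected K → Set.range a ⊆ K → K = Set.univ)
    (Y : Set X) (hYc : IsCompact Y) (hYconn : IsConnected Y) :
    {C : Set X | ∃ x ∈ Yᶜ, C = connectedComponentIn Yᶜ x}.encard ≤ (N : ℕ∞) := by
  refine (encard_connectedComponentIn_le a fun x hx =>
    exists_mem_connectedComponentIn_compl_of_irreducible a hirr hYconn hYc.isClosed hx).trans ?_
  simp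

/-- Let `X` be a continuum (nonempty compact connected metric space),
`N` a positive integer, and `a 1, …, a N ∈ X` points such that `X` is irreducible about
`{a 1, …, a N}` (no proper subcontinuum of `X` contains all the points `a i`).
Then for every subcontinuum `Y ⊆ X`, the set `X \ Y` has at most `N` connected
components. -/
theorem stmt_0 (X : Type*) [MetricSpace X] [CompactSpace X] [ConnectedSpace X] [Nonempty X]
    (N : ℕ) (hN : 0 < N) (a : Fin N → X)
    (hirr : ∀ K : Set X, IsCompact K → IsConnected K → Set.range a ⊆ K → K = Set.univ)
    (Y : Set X) (hYc : IsCompact Y) (hYconn : IsConnected Y) :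
    {C : Set X | ∃ x ∈ Yᶜ, C = connectedComponentIn Yᶜ x}.encard ≤ (N : ℕ∞) :=
  stmt_0_general X N a hirr Y hYc hYconn
end

section
/- Let ℂ∞ denote the Riemann sphere, the one-point compactification OnePoint ℂ of the complex plane with its standard topology. Let U ⊆ ℂ∞ be a simply connected open set whose boundary ∂U contains at least two points, and let V be a connected component of ℂ∞ ∖ ∂U with V ≠ U. Then U is contained in ℂ∞ ∖ cl(V), and if W denotes the connected component of ℂ∞ ∖ cl(V) that contains U, then ∂W = ∂V. In particular, ∂V is the common boundary of the two disjoint connected open sets V and W. -/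
/-!
A connected open set `U` is a component of `ℂ∞ ∖ ∂U`, so every other component `V` is disjoint
from the open set `U`, and hence so is `cl V`. Since the sphere is locally connected, the frontier
of a component of an open set `S` lies in `∂S`; this gives `∂V ⊆ ∂U` and `∂W ⊆ ∂(cl V) ⊆ ∂V`.
Conversely `∂V ⊆ ∂U ⊆ cl U ⊆ cl W`, while `∂V ⊆ cl V` misses `W`, so `∂V ⊆ ∂W`.
-/

open Set Topology

/-- The Riemann sphere, as the one-point compactification of `ℂ`. -/
abbrev RiemannSphere : Type := OnePoint ℂ

instance : LocallyConnectedSpace RiemannSphere :=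
  haveI := ChartedSpace.locallyConnectedSpace (EuclideanSpace ℝ (Fin 2))
    (Metric.sphere (0 : EuclideanSpace ℝ (Fin 3)) 1)
  (onePointEquivSphereOfFinrankEq (ι := Fin 3) (V := ℂ) (by simp)).locallyConnectedSpace

section ConnectedComponents

variable {X : Type*} [TopologicalSpace X]

theorem IsOpen.connectedComponentIn_compl_frontier {U : Set X} (hU : IsOpen U)
    (hUc : IsPreconnected U) {x : X} (hx : x ∈ U) :
    connectedComponentIn (frontier U)ᶜ x = U := by
  have hUF : U ⊆ (frontier U)ᶜ := fun _ hy hfr => hfr.2 (hU.interior_eq.symm ▸ hy)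
  refine subset_antisymm ?_ (hUc.subset_connectedComponentIn hx hUF)
  have hF : (frontier U)ᶜ = U ∪ (closure U)ᶜ := by
    rw [hU.frontier_eq, sdiff_eq, compl_inter, compl_compl, union_comm]
  refine isPreconnected_connectedComponentIn.subset_left_of_subset_union hU
    isClosed_closure.isOpen_compl (disjoint_compl_right.mono_left subset_closure)
    (hF ▸ connectedComponentIn_subset _ x) ⟨x, mem_connectedComponentIn (hUF hx), hx⟩

variable [LocallyConnectedSpace X] {S : Set X}

theorem IsOpen.closure_connectedComponentIn_inter_subset (hS : IsOpen S) (x : X) :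
    closure (connectedComponentIn S x) ∩ S ⊆ connectedComponentIn S x := by
  rintro y ⟨hyC, hyS⟩
  obtain ⟨z, hzy, hzx⟩ :=
    mem_closure_iff_nhds.1 hyC _ (connectedComponentIn_mem_nhds (hS.mem_nhds hyS))
  rw [connectedComponentIn_eq hzx, ← connectedComponentIn_eq hzy]
  exact mem_connectedComponentIn hyS

theorem IsOpen.frontier_connectedComponentIn_subset (hS : IsOpen S) (x : X) :
    frontier (connectedComponentIn S x) ⊆ frontier S := by
  rw [hS.connectedComponentIn.frontier_eq, hS.frontier_eq]
  rintro y ⟨hyC, hyn⟩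
  exact ⟨closure_mono (connectedComponentIn_subset S x) hyC,
    fun hyS => hyn (hS.closure_connectedComponentIn_inter_subset x ⟨hyC, hyS⟩)⟩

theorem IsClosed.frontier_connectedComponentIn_compl_subset {K : Set X} (hK : IsClosed K)
    (x : X) : frontier (connectedComponentIn Kᶜ x) ⊆ K :=
  (hK.isOpen_compl.frontier_connectedComponentIn_subset x).trans
    (frontier_compl K ▸ hK.frontier_subset)

theorem frontier_connectedComponentIn_compl_closure {V : Set X} {x : X}
    (h : frontier V ⊆ closure (connectedComponentIn (closure V)ᶜ x)) :
    frontier (connectedComponentIn (closure V)ᶜ x) = frontier V := by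
  have hW : IsOpen (connectedComponentIn (closure V)ᶜ x) :=
    isClosed_closure.isOpen_compl.connectedComponentIn
  refine subset_antisymm ?_ fun y hy => ?_
  · exact (isClosed_closure.isOpen_compl.frontier_connectedComponentIn_subset x).trans
      (frontier_compl (closure V) ▸ frontier_closure_subset)
  · rw [hW.frontier_eq]
    exact ⟨h hy, fun hyW => connectedComponentIn_subset _ x hyW (frontier_subset_closure hy)⟩

end ConnectedComponents

theorem stmt_1_general (U V : Set RiemannSphere) (hUopen : IsOpen U)
    (hUsc : SimplyConnectedSpace U)
    (hV : ∃ x ∈ (frontier U)ᶜ, V = connectedComponentIn (frontier U)ᶜ x)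
    (hVU : V ≠ U) :
    U ⊆ (closure V)ᶜ ∧
      ∀ x ∈ U,
        frontier (connectedComponentIn (closure V)ᶜ x) = frontier V ∧
          Disjoint V (connectedComponentIn (closure V)ᶜ x) := by
  obtain ⟨x₀, -, rfl⟩ := hV
  have hUconn : IsPreconnected U := by
    rw [isPreconnected_iff_preconnectedSpace]; infer_instance
  have hVU_disj : Disjoint (connectedComponentIn (frontier U)ᶜ x₀) U :=
    disjoint_left.2 fun v hvV hvU => hVU <| by
      rw [connectedComponentIn_eq hvV, hUopen.connectedComponentIn_compl_frontier hUconn hvU]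
  have hUV : U ⊆ (closure (connectedComponentIn (frontier U)ᶜ x₀))ᶜ :=
    (hVU_disj.closure_left hUopen).symm.subset_compl_right
  refine ⟨hUV, fun x hx => ⟨frontier_connectedComponentIn_compl_closure ?_,
    disjoint_compl_right.mono subset_closure (connectedComponentIn_subset _ x)⟩⟩
  calc frontier (connectedComponentIn (frontier U)ᶜ x₀)
      ⊆ frontier U := isClosed_frontier.frontier_connectedComponentIn_compl_subset x₀
    _ ⊆ closure U := frontier_subset_closure
    _ ⊆ _ := closure_mono (hUconn.subset_connectedComponentIn hx hUV)

/-- Let `U ⊆ ℂ∞` be a simply connected open set whose boundary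
contains at least two points, and let `V` be a connected component of `ℂ∞ \ ∂U` with
`V ≠ U`.  Then `U ⊆ ℂ∞ \ cl(V)`, and, letting `W` be the connected component of
`ℂ∞ \ cl(V)` containing `U` (i.e. `W = connectedComponentIn (closure V)ᶜ x` for any
`x ∈ U`), we have `∂W = ∂V`; moreover `V` and `W` are disjoint, so `∂V` is the common
boundary of the two disjoint connected open sets `V` and `W`. -/
theorem stmt_1 (U V : Set RiemannSphere) (hUopen : IsOpen U)
    (hUsc : SimplyConnectedSpace U) (hbd : (frontier U).Nontrivial)
    (hV : ∃ x ∈ (frontier U)ᶜ, V = connectedComponentIn (frontier U)ᶜ x)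
    (hVU : V ≠ U) :
    U ⊆ (closure V)ᶜ ∧
      ∀ x ∈ U,
        frontier (connectedComponentIn (closure V)ᶜ x) = frontier V ∧
          Disjoint V (connectedComponentIn (closure V)ᶜ x) :=
  stmt_1_general U V hUopen hUsc hV hVU
end

section
/- Let ℂ∞ denote the Riemann sphere (OnePoint ℂ). Let U ⊆ ℂ∞ be a simply connected open set whose boundary ∂U contains at least two points, and let V ≠ U be a connected component of ℂ∞ ∖ ∂U such that ∂V has nonempty interior relative to ∂U. Suppose ∂V is monostratic, i.e., ∂V = (⋃_{i∈ℕ} X_i) ∪ (⋃_{i∈ℕ} A_i), where each X_i is an indecomposable subcontinuum of ∂V and each A_i is a subcontinuum of ∂V that is nowhere dense in ∂V. Then some X_i has nonempty interior relative to ∂U; in particular, ∂V contains an indecomposable subcontinuum with nonempty interior relative to ∂U. -/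
open Set Topology Metric OnePoint

/-- A subcontinuum (of an ambient space) is a nonempty compact connected set;
nonemptiness is part of `IsConnected`. -/
def IsSubcontinuum {α : Type*} [TopologicalSpace α] (K : Set α) : Prop :=
  IsCompact K ∧ IsConnected K

/-- A set is indecomposable if it is not the union of two of its proper subcontinua. -/
def IsIndecomposableSet {α : Type*} [TopologicalSpace α] (K : Set α) : Prop :=
  ∀ K₁ K₂ : Set α, IsSubcontinuum K₁ → K₁ ⊆ K → IsSubcontinuum K₂ → K₂ ⊆ K →
    K₁ ∪ K₂ = K → K₁ = K ∨ K₂ = K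

/-- `Z` is nowhere dense in `X` (in the subspace topology of `X`). -/
def NowhereDenseIn {α : Type*} [TopologicalSpace α] (X Z : Set α) : Prop :=
  IsNowhereDense ((↑) ⁻¹' Z : Set X)

/-- The interior of `Z` relative to `X`, i.e. the interior of the corresponding subset
of the subspace `X`. -/
def relInterior {α : Type*} [TopologicalSpace α] (X Z : Set α) : Set X :=
  interior ((↑) ⁻¹' Z : Set X)

/-- The set of complex numbers of norm greater than `R ≥ 0` is connected. -/
lemma isConnected_norm_gt {R : ℝ} (hR : 0 ≤ R) : IsConnected {z : ℂ | R < ‖z‖} := by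
  have hrank : (1 : Cardinal) < Module.rank ℝ ℂ := by
    rw [Complex.rank_real_complex]; norm_num
  have hnorm : ∀ r ∈ Ioi R, ‖(r : ℂ)‖ = r := by
    intro r hr
    rw [Complex.norm_real, Real.norm_eq_abs, abs_of_pos (lt_of_le_of_lt hR hr)]
  have key : {z : ℂ | R < ‖z‖} =
      ⋃₀ ((fun r : ℝ => (Metric.sphere (0 : ℂ) r ∪ (fun s : ℝ => (s : ℂ)) '' Ioi R)) '' Ioi R) := by
    ext z
    simp only [mem_setOf_eq, sUnion_image, mem_iUnion, mem_union, Metric.mem_sphere,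
      dist_zero_right, exists_prop]
    constructor
    · intro hz; exact ⟨‖z‖, hz, Or.inl rfl⟩
    · rintro ⟨r, hr, hz | ⟨s, hs, rfl⟩⟩
      · rwa [hz]
      · rw [hnorm s hs]; exact hs
  have hne : ((R + 1 : ℝ) : ℂ) ∈ {z : ℂ | R < ‖z‖} := by
    simp only [mem_setOf_eq]; rw [hnorm _ (by simp : R + 1 ∈ Ioi R)]; linarith
  refine ⟨⟨_, hne⟩, ?_⟩
  rw [key]
  apply isPreconnected_sUnion ((R + 1 : ℝ) : ℂ)
  · rintro s ⟨r, _, rfl⟩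
    exact Or.inr ⟨R + 1, by simp, rfl⟩
  · rintro s ⟨r, hr, rfl⟩
    apply IsPreconnected.union ((r : ℂ))
    · simp only [Metric.mem_sphere, dist_zero_right]
      exact hnorm r hr
    · exact ⟨r, hr, rfl⟩
    · exact (isConnected_sphere hrank 0 (hR.trans hr.le)).isPreconnected
    · exact isPreconnected_Ioi.image _ Complex.continuous_ofReal.continuousOn

/-- The Riemann sphere is locally connected. -/
instance inst_s2 : LocallyConnectedSpace RiemannSphere := by
  rw [locallyConnectedSpace_iff_subsets_isOpen_isConnected]
  intro x O hO
  obtain ⟨G, hGO, hGopen, hxG⟩ := mem_nhds_iff.mp hO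
  cases x with
  | none =>
    have hinf : (∞ : RiemannSphere) ∈ G := hxG
    obtain ⟨hK, -⟩ := (OnePoint.isOpen_iff_of_mem' hinf).mp hGopen
    obtain ⟨R₀, hR₀⟩ := hK.isBounded.subset_closedBall 0
    set R := max R₀ 0 with hRdef
    have hR : 0 ≤ R := le_max_right _ _
    set s : Set ℂ := {z : ℂ | R < ‖z‖} with hsdef
    have hsopen : IsOpen s := isOpen_lt continuous_const continuous_norm
    have hsG : ∀ z ∈ s, (z : RiemannSphere) ∈ G := by
      intro z hz
      by_contra hzG
      have : z ∈ Metric.closedBall (0 : ℂ) R₀ := hR₀ hzG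
      rw [Metric.mem_closedBall, dist_zero_right] at this
      exact absurd (lt_of_le_of_lt (le_max_left R₀ 0) hz) (not_lt.mpr this)
    set V : Set RiemannSphere := {∞} ∪ (↑) '' s with hVdef
    have hpre : ((↑) ⁻¹' V : Set ℂ) = s := by
      ext z
      simp only [hVdef, preimage_union, mem_union, mem_preimage, mem_singleton_iff]
      constructor
      · rintro (h | h)
        · exact absurd h (OnePoint.coe_ne_infty z)
        · obtain ⟨w, hw, hwz⟩ := h
          rwa [← OnePoint.coe_injective hwz]
      · intro h
        exact Or.inr ⟨z, h, rfl⟩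
    have hVinf : (∞ : RiemannSphere) ∈ V := Or.inl rfl
    refine ⟨V, ?_, ?_, hVinf, ?_⟩
    · rintro v (hv | ⟨z, hz, rfl⟩)
      · exact hGO (by rwa [mem_singleton_iff.mp hv])
      · exact hGO (hsG z hz)
    · rw [OnePoint.isOpen_iff_of_mem' hVinf, hpre]
      refine ⟨?_, hsopen⟩
      have : (sᶜ : Set ℂ) = Metric.closedBall (0 : ℂ) R := by
        ext z; simp [hsdef, Metric.mem_closedBall, dist_zero_right, not_lt]
      rw [this]
      exact isCompact_closedBall 0 R
    · have hcs : IsConnected s := isConnected_norm_gt hR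
      have himg : IsConnected ((↑) '' s : Set RiemannSphere) :=
        hcs.image _ OnePoint.continuous_coe.continuousOn
      refine ⟨⟨∞, hVinf⟩, ?_⟩
      apply himg.isPreconnected.subset_closure subset_union_right
      rintro v (hv | hv)
      · rw [mem_singleton_iff.mp hv]
        rw [_root_.mem_closure_iff]
        intro o ho hino
        obtain ⟨hKo, -⟩ := (OnePoint.isOpen_iff_of_mem' hino).mp ho
        obtain ⟨R₁, hR₁⟩ := hKo.isBounded.subset_closedBall 0
        set r := max R R₁ + 1 with hr
        have hrs : (r : ℂ) ∈ s := by
          show R < ‖(r : ℂ)‖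
          rw [Complex.norm_real, Real.norm_eq_abs]
          have : R ≤ max R R₁ := le_max_left _ _
          have h0 : (0:ℝ) ≤ max R R₁ := hR.trans this
          rw [abs_of_pos (by linarith)]
          linarith
        have hro : ((r : ℂ) : RiemannSphere) ∈ o := by
          by_contra hc
          have := hR₁ hc
          rw [Metric.mem_closedBall, dist_zero_right, Complex.norm_real,
            Real.norm_eq_abs] at this
          have h0 : (0:ℝ) ≤ max R R₁ := hR.trans (le_max_left _ _)
          rw [abs_of_pos (by linarith)] at this
          have : R₁ ≤ max R R₁ := le_max_right _ _
          linarith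
        exact ⟨_, hro, ⟨(r : ℂ), hrs, rfl⟩⟩
      · exact subset_closure hv
  | some z =>
    have hzG : z ∈ ((↑) ⁻¹' G : Set ℂ) := hxG
    have hGopen' : IsOpen ((↑) ⁻¹' G : Set ℂ) := hGopen.preimage OnePoint.continuous_coe
    obtain ⟨V', hV'G, hV'open, hzV', hV'conn⟩ :=
      locallyConnectedSpace_iff_subsets_isOpen_isConnected.mp inferInstance z
        ((↑) ⁻¹' G) (hGopen'.mem_nhds hzG)
    refine ⟨(↑) '' V', ?_, OnePoint.isOpenEmbedding_coe.isOpenMap _ hV'open,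
      ⟨z, hzV', rfl⟩, hV'conn.image _ OnePoint.continuous_coe.continuousOn⟩
    rintro v ⟨w, hw, rfl⟩
    exact hGO (hV'G hw)

/-- Let `U ⊆ ℂ∞` be a simply connected open set whose boundary has at
least two points, and let `V ≠ U` be a connected component of `ℂ∞ \ ∂U` such that `∂V`
has nonempty interior relative to `∂U`.  Suppose `∂V` is monostratic, i.e.
`∂V = (⋃ i, Xf i) ∪ (⋃ i, Af i)` where each `Xf i` is an indecomposable subcontinuum of
`∂V` and each `Af i` is a subcontinuum of `∂V` nowhere dense in `∂V`.  Then some `Xf i`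
has nonempty interior relative to `∂U`; in particular `∂V` contains an indecomposable
subcontinuum with nonempty interior relative to `∂U`. -/
theorem stmt_2 (U V : Set RiemannSphere) (hUopen : IsOpen U)
    (hUsc : SimplyConnectedSpace U) (hbd : (frontier U).Nontrivial)
    (hV : ∃ x ∈ (frontier U)ᶜ, V = connectedComponentIn (frontier U)ᶜ x)
    (hVU : V ≠ U)
    (hint : (relInterior (frontier U) (frontier V)).Nonempty)
    (Xf Af : ℕ → Set RiemannSphere)
    (hXf : ∀ i, Xf i ⊆ frontier V ∧ IsSubcontinuum (Xf i) ∧ IsIndecomposableSet (Xf i))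
    (hAf : ∀ i, Af i ⊆ frontier V ∧ IsSubcontinuum (Af i) ∧
      NowhereDenseIn (frontier V) (Af i))
    (hmono : frontier V = (⋃ i, Xf i) ∪ ⋃ i, Af i) :
    (∃ i, (relInterior (frontier U) (Xf i)).Nonempty) ∧
      ∃ K : Set RiemannSphere, K ⊆ frontier V ∧ IsSubcontinuum K ∧
        IsIndecomposableSet K ∧ (relInterior (frontier U) K).Nonempty := by
  classical
  obtain ⟨x₀, hx₀, hVdef⟩ := hV
  have hFopen : IsOpen (frontier U)ᶜ := isClosed_frontier.isOpen_compl
  have hVopen : IsOpen V := hVdef ▸ hFopen.connectedComponentIn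
  have hVsub : V ⊆ (frontier U)ᶜ := hVdef ▸ connectedComponentIn_subset _ _
  have hx₀V : x₀ ∈ V := hVdef ▸ mem_connectedComponentIn hx₀
  -- ∂V ⊆ ∂U
  have hfron : frontier V ⊆ frontier U := by
    intro y hy
    by_contra hyU
    have hycl : y ∈ closure V := hy.1
    have hins : insert y V ⊆ connectedComponentIn (frontier U)ᶜ x₀ := by
      apply IsPreconnected.subset_connectedComponentIn
      · have hVpc : IsPreconnected V := hVdef ▸ isPreconnected_connectedComponentIn
        exact hVpc.subset_closure (subset_insert _ _) (insert_subset hycl subset_closure)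
      · exact mem_insert_of_mem _ hx₀V
      · exact insert_subset hyU hVsub
    have hyV : y ∈ V := hVdef ▸ hins (mem_insert y V)
    exact hy.2 (by rwa [hVopen.interior_eq])
  -- set up the Baire category argument in the subspace ∂U
  set T := ↥(frontier U)
  set W : Set T := interior ((↑) ⁻¹' frontier V : Set T) with hWdef
  have hWopen : IsOpen W := isOpen_interior
  have hWsub : W ⊆ (↑) ⁻¹' frontier V := interior_subset
  obtain ⟨w₀, hw₀⟩ := hint
  haveI : CompactSpace T :=
    isCompact_iff_compactSpace.mp (isClosed_frontier.isCompact)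
  haveI : LocallyCompactSpace ↥W := hWopen.locallyCompactSpace
  haveI : Nonempty ↥W := ⟨⟨w₀, hw₀⟩⟩
  set p : ↥W → RiemannSphere := fun y => ((y : T) : RiemannSphere) with hpdef
  have hpcont : Continuous p := continuous_subtype_val.comp continuous_subtype_val
  have hpmem : ∀ y : ↥W, p y ∈ frontier V := fun y => hWsub y.2
  set f : ℕ ⊕ ℕ → Set ↥W := Sum.elim (fun i => p ⁻¹' Xf i) (fun i => p ⁻¹' Af i) with hfdef
  have hclosed : ∀ j, IsClosed (f j) := by
    rintro (i | i)
    · exact ((hXf i).2.1.1.isClosed).preimage hpcont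
    · exact ((hAf i).2.1.1.isClosed).preimage hpcont
  have hcover : ⋃ j, f j = univ := by
    ext y
    simp only [mem_iUnion, mem_univ, iff_true]
    have := hpmem y
    rw [hmono] at this
    rcases this with h | h
    · obtain ⟨i, hi⟩ := mem_iUnion.mp h
      exact ⟨Sum.inl i, hi⟩
    · obtain ⟨i, hi⟩ := mem_iUnion.mp h
      exact ⟨Sum.inr i, hi⟩
  obtain ⟨j, hj⟩ := nonempty_interior_of_iUnion_of_closed hclosed hcover
  have hmap : IsOpenMap ((↑) : ↥W → T) := hWopen.isOpenMap_subtype_val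
  have key : ∃ i, (relInterior (frontier U) (Xf i)).Nonempty := by
    cases j with
    | inl i =>
      refine ⟨i, ?_⟩
      obtain ⟨y, hy⟩ := hj
      have hO : IsOpen (((↑) : ↥W → T) '' interior (f (Sum.inl i))) := hmap _ isOpen_interior
      have hsub : ((↑) : ↥W → T) '' interior (f (Sum.inl i)) ⊆ (↑) ⁻¹' Xf i := by
        rintro t ⟨y', hy', rfl⟩
        have h := interior_subset hy'
        exact h
      exact ⟨(y : T), interior_maximal hsub hO ⟨y, hy, rfl⟩⟩
    | inr i =>
      exfalso
      obtain ⟨y, hy⟩ := hj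
      set O : Set T := ((↑) : ↥W → T) '' interior (f (Sum.inr i)) with hOdef
      have hOopen : IsOpen O := hmap _ isOpen_interior
      have hOA : O ⊆ (↑) ⁻¹' Af i := by
        rintro t ⟨y', hy', rfl⟩
        have h := interior_subset hy'
        exact h
      have hOW : O ⊆ W := by rintro t ⟨y', _, rfl⟩; exact y'.2
      obtain ⟨G, hGopen, hGeq⟩ := isOpen_induced_iff.mp hOopen
      -- pass to the subspace ∂V
      set Q : Set ↥(frontier V) := (↑) ⁻¹' G with hQdef
      have hQopen : IsOpen Q := hGopen.preimage continuous_subtype_val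
      have ht₀ : ((y : T) : T) ∈ O := ⟨y, hy, rfl⟩
      have hy₀G : ((y : T) : RiemannSphere) ∈ G := by
        have : (y : T) ∈ (↑) ⁻¹' G := hGeq ▸ ht₀
        exact this
      have hy₀V : ((y : T) : RiemannSphere) ∈ frontier V := hWsub (hOW ht₀)
      have hQne : Q.Nonempty := ⟨⟨_, hy₀V⟩, hy₀G⟩
      have hQA : Q ⊆ ((↑) ⁻¹' Af i : Set ↥(frontier V)) := by
        intro q hq
        have hqU : (q : RiemannSphere) ∈ frontier U := hfron q.2
        have : (⟨(q : RiemannSphere), hqU⟩ : T) ∈ (↑) ⁻¹' G := hq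
        rw [hGeq] at this
        exact hOA this
      have hnwd := (hAf i).2.2
      unfold NowhereDenseIn IsNowhereDense at hnwd
      have hAclosed : IsClosed ((↑) ⁻¹' Af i : Set ↥(frontier V)) :=
        ((hAf i).2.1.1.isClosed).preimage continuous_subtype_val
      have : Q ⊆ interior (closure ((↑) ⁻¹' Af i : Set ↥(frontier V))) :=
        interior_maximal (hQA.trans subset_closure) hQopen
      obtain ⟨q, hq⟩ := hQne
      rw [hnwd] at this
      exact this hq
  obtain ⟨i, hi⟩ := key
  exact ⟨⟨i, hi⟩, Xf i, (hXf i).1, (hXf i).2.1, (hXf i).2.2, hi⟩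
end

section
/- Let p : ℂ → ℂ be the evaluation map of a nonconstant polynomial with complex coefficients. Let Y ⊆ ℂ be a compact set and let X ⊆ Y be a compact set that is nowhere dense in Y (with the subspace topology on Y). Then the image p(X) is nowhere dense in p(Y). -/
set_option maxHeartbeats 1000000


open Set Topology

/-- For a closed set `Z`, `NowhereDenseIn Y Z` says exactly that no relatively open
nonempty subset of `Y` is contained in `Z`. -/
lemma nowhereDenseIn_iff_of_isClosed {α : Type*} [TopologicalSpace α] {Y Z : Set α}
    (hZ : IsClosed Z) :
    NowhereDenseIn Y Z ↔ ∀ U : Set α, IsOpen U → U ∩ Y ⊆ Z → ¬(U ∩ Y).Nonempty := by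
  have hcl : IsClosed ((↑) ⁻¹' Z : Set Y) := hZ.preimage continuous_subtype_val
  rw [NowhereDenseIn, hcl.isNowhereDense_iff]
  constructor
  · intro h U hU hsub ⟨x, hxU, hxY⟩
    have hx : (⟨x, hxY⟩ : Y) ∈ interior ((↑) ⁻¹' Z : Set Y) := by
      refine mem_interior.2 ⟨(Subtype.val ⁻¹' U : Set Y), ?_, hU.preimage continuous_subtype_val, hxU⟩
      intro y hy
      exact hsub ⟨hy, y.2⟩
    rw [h] at hx
    exact hx
  · intro h
    rw [eq_empty_iff_forall_notMem]
    intro y hy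
    obtain ⟨U, hU, hUeq⟩ := isOpen_induced_iff.1 (isOpen_interior (s := ((↑) ⁻¹' Z : Set Y)))
    have hysub : U ∩ Y ⊆ Z := by
      rintro x ⟨hxU, hxY⟩
      have : (⟨x, hxY⟩ : Y) ∈ interior ((↑) ⁻¹' Z : Set Y) := by
        rw [← hUeq]; exact hxU
      have h2 : (⟨x, hxY⟩ : Y) ∈ (Subtype.val ⁻¹' Z : Set Y) := interior_subset this
      exact h2
    refine h U hU hysub ⟨(y : α), ?_, y.2⟩
    have : y ∈ ((↑) ⁻¹' U : Set Y) := by rw [hUeq]; exact hy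
    exact this

/-- Finite Baire-type pigeonhole: if a nonempty relatively open piece of `S` is covered by
finitely many closed sets, one of them contains a nonempty relatively open piece of `S`. -/
lemma finite_baire {α : Type*} [TopologicalSpace α] {ι : Type*} (t : Finset ι)
    (T : ι → Set α) (S : Set α) (hT : ∀ i ∈ t, IsClosed (T i)) :
    ∀ Ω : Set α, IsOpen Ω → (Ω ∩ S).Nonempty → Ω ∩ S ⊆ ⋃ i ∈ t, T i →
      ∃ i ∈ t, ∃ Ω' : Set α, IsOpen Ω' ∧ (Ω' ∩ S).Nonempty ∧ Ω' ∩ S ⊆ T i := by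
  classical
  induction t using Finset.induction_on with
  | empty =>
    rintro Ω _ ⟨x, hx⟩ hsub
    simpa using hsub hx
  | @insert i t hi ih =>
    intro Ω hΩ hne hsub
    by_cases hcase : ∃ Ω' : Set α, IsOpen Ω' ∧ (Ω' ∩ S).Nonempty ∧ Ω' ∩ S ⊆ T i
    · obtain ⟨Ω', h1, h2, h3⟩ := hcase
      exact ⟨i, Finset.mem_insert_self i t, Ω', h1, h2, h3⟩
    · have hnot : ¬(Ω ∩ S ⊆ T i) := fun hss => hcase ⟨Ω, hΩ, hne, hss⟩
      obtain ⟨w, hwΩS, hwT⟩ := not_subset.1 hnot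
      have hTi : IsClosed (T i) := hT i (Finset.mem_insert_self i t)
      have hNopen : IsOpen (Ω ∩ (T i)ᶜ) := hΩ.inter hTi.isOpen_compl
      have hNne : ((Ω ∩ (T i)ᶜ) ∩ S).Nonempty := ⟨w, ⟨hwΩS.1, hwT⟩, hwΩS.2⟩
      have hNsub : (Ω ∩ (T i)ᶜ) ∩ S ⊆ ⋃ j ∈ t, T j := by
        rintro z ⟨⟨hzΩ, hzT⟩, hzS⟩
        have := hsub ⟨hzΩ, hzS⟩
        simp only [Finset.mem_insert, mem_iUnion, exists_prop] at this ⊢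
        rcases this with ⟨j, hj | hj, hzj⟩
        · exact absurd (hj ▸ hzj) hzT
        · exact ⟨j, hj, hzj⟩
      obtain ⟨j, hj, Ω', h1, h2, h3⟩ :=
        ih (fun j hj => hT j (Finset.mem_insert_of_mem hj)) (Ω ∩ (T i)ᶜ) hNopen hNne hNsub
      exact ⟨j, Finset.mem_insert_of_mem hj, Ω', h1, h2, h3⟩

/-- At a point where the derivative of `p` does not vanish, `p` has a continuous local
section defined on a neighborhood of the image point. -/
lemma local_section (p : Polynomial ℂ) (z : ℂ) (hz : p.derivative.eval z ≠ 0) :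
    ∃ (S T : Set ℂ) (s : ℂ → ℂ), IsOpen S ∧ IsOpen T ∧ z ∈ S ∧ p.eval z ∈ T ∧
      ContinuousOn s T ∧ (∀ w ∈ T, p.eval (s w) = w ∧ s w ∈ S) ∧
      (∀ x ∈ S, ∀ w ∈ T, p.eval x = w → x = s w) := by
  have hd : HasStrictDerivAt (fun x => p.eval x) (p.derivative.eval z) z :=
    p.hasStrictDerivAt z
  have hfd := hd.hasStrictFDerivAt_equiv hz
  set Φ := hfd.toOpenPartialHomeomorph (fun x => p.eval x) with hΦ
  have hΦcoe : (Φ : ℂ → ℂ) = fun x => p.eval x :=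
    hfd.toOpenPartialHomeomorph_coe
  refine ⟨Φ.source, Φ.target, Φ.symm, Φ.open_source, Φ.open_target,
    hfd.mem_toOpenPartialHomeomorph_source, ?_, Φ.continuousOn_symm, ?_, ?_⟩
  · have := Φ.map_source hfd.mem_toOpenPartialHomeomorph_source
    rwa [hΦcoe] at this
  · intro w hw
    constructor
    · have := Φ.right_inv hw
      rw [hΦcoe] at this
      exact this
    · exact Φ.map_target hw
  · intro x hx w hw hpx
    have h1 : Φ.symm w ∈ Φ.source := Φ.map_target hw
    have h2 : (Φ : ℂ → ℂ) (Φ.symm w) = w := Φ.right_inv hw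
    have h3 : (Φ : ℂ → ℂ) x = w := by rw [hΦcoe]; exact hpx
    exact Φ.injOn hx h1 (h3.trans h2.symm)

/-- Let `p : ℂ → ℂ` be the evaluation map of a nonconstant polynomial
with complex coefficients, `Y ⊆ ℂ` compact, and `X ⊆ Y` a compact set nowhere dense in
`Y`.  Then `p(X)` is nowhere dense in `p(Y)`. -/
theorem stmt_5 (p : Polynomial ℂ) (hp : 0 < p.natDegree)
    (Y X : Set ℂ) (hYcomp : IsCompact Y) (hXY : X ⊆ Y) (hXcomp : IsCompact X)
    (hnd : NowhereDenseIn Y X) :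
    NowhereDenseIn ((fun z => p.eval z) '' Y) ((fun z => p.eval z) '' X) := by
  classical
  have hpc : Continuous fun z : ℂ => p.eval z := p.continuous
  have hXcl : IsClosed X := hXcomp.isClosed
  have hX : ∀ U : Set ℂ, IsOpen U → U ∩ Y ⊆ X → ¬(U ∩ Y).Nonempty :=
    (nowhereDenseIn_iff_of_isClosed hXcl).1 hnd
  have hpXcl : IsClosed ((fun z => p.eval z) '' X) := (hXcomp.image hpc).isClosed
  rw [nowhereDenseIn_iff_of_isClosed hpXcl]
  rintro V hV hVsub ⟨w₀, hw₀V, hw₀pY⟩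
  -- fibers of `p` are finite
  have hfibfin : ∀ w : ℂ, {z : ℂ | p.eval z = w}.Finite := by
    intro w
    have hq : p - Polynomial.C w ≠ 0 := by
      intro h
      have : p = Polynomial.C w := by linear_combination (norm := ring_nf) h
      rw [this] at hp
      simp at hp
    have := Polynomial.finite_setOf_isRoot hq
    refine this.subset ?_
    intro z hz
    simp only [mem_setOf_eq] at hz
    simp [Polynomial.IsRoot, hz]
  -- critical values
  have hd' : p.derivative ≠ 0 := by
    intro h
    have := Polynomial.natDegree_eq_zero_of_derivative_eq_zero h
    omega
  set CV : Set ℂ := (fun z => p.eval z) '' {z : ℂ | p.derivative.eval z = 0} with hCV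
  have hCVfin : CV.Finite := (Polynomial.finite_setOf_isRoot hd').image _
  by_cases hreg : ∃ w₁ ∈ V ∩ ((fun z => p.eval z) '' Y), w₁ ∉ CV
  · -- Main case: a regular value in the relatively open piece.
    obtain ⟨w₁, ⟨hw₁V, hw₁pY⟩, hw₁cv⟩ := hreg
    have hderiv : ∀ z : ℂ, p.eval z = w₁ → p.derivative.eval z ≠ 0 := by
      intro z hz hz'
      exact hw₁cv ⟨z, hz', hz⟩
    have hsec : ∀ z : ℂ, p.eval z = w₁ →
        ∃ (S T : Set ℂ) (s : ℂ → ℂ), IsOpen S ∧ IsOpen T ∧ z ∈ S ∧ p.eval z ∈ T ∧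
          ContinuousOn s T ∧ (∀ w ∈ T, p.eval (s w) = w ∧ s w ∈ S) ∧
          (∀ x ∈ S, ∀ w ∈ T, p.eval x = w → x = s w) :=
      fun z hz => local_section p z (hderiv z hz)
    choose! S T s hSopen hTopen hzS hwT hscont hsect hinj using hsec
    set fs : Finset ℂ := (hfibfin w₁).toFinset with hfs
    have hfs_mem : ∀ z : ℂ, z ∈ fs ↔ p.eval z = w₁ := by
      intro z; rw [hfs, Set.Finite.mem_toFinset]; rfl
    -- an open neighborhood of w₁ inside V and all targets
    set N : Set ℂ := V ∩ ⋂ z ∈ fs, T z with hN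
    have hNopen : IsOpen N :=
      hV.inter (isOpen_biInter_finset fun z hz => hTopen z ((hfs_mem z).1 hz))
    have hw₁N : w₁ ∈ N := by
      refine ⟨hw₁V, ?_⟩
      simp only [mem_iInter]
      intro z hz
      have hzw := (hfs_mem z).1 hz
      have := hwT z hzw
      rwa [hzw] at this
    -- compact escape set
    set K : Set ℂ := (fun z : ℂ => p.eval z) ⁻¹' Metric.closedBall w₁ 1 ∩
        (⋃ z ∈ fs, S z)ᶜ with hK
    have hKcl : IsClosed K :=
      (Metric.isClosed_closedBall.preimage hpc).inter
        (isOpen_biUnion fun z hz => hSopen z ((hfs_mem z).1 hz)).isClosed_compl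
    have hKcomp : IsCompact K := by
      have hdeg : 0 < p.degree := Polynomial.natDegree_pos_iff_degree_pos.1 hp
      have htend : Filter.Tendsto (fun z : ℂ => ‖p.eval z‖) (Filter.cocompact ℂ)
          Filter.atTop :=
        p.tendsto_norm_atTop hdeg tendsto_norm_cocompact_atTop
      have hev : ∀ᶠ z in Filter.cocompact ℂ, ‖w₁‖ + 2 ≤ ‖p.eval z‖ :=
        htend.eventually_ge_atTop _
      obtain ⟨M, hMcomp, hMsub⟩ := Filter.mem_cocompact'.1 hev
      refine hMcomp.of_isClosed_subset hKcl ?_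
      intro z hzK
      by_contra hzM
      have h2 : ‖w₁‖ + 2 ≤ ‖p.eval z‖ := by
        by_contra h
        exact hzM (hMsub h)
      have h3 : dist (p.eval z) w₁ ≤ 1 := Metric.mem_closedBall.1 hzK.1
      have h3' : ‖p.eval z - w₁‖ ≤ 1 := by rw [← dist_eq_norm]; exact h3
      have h5 := norm_sub_norm_le (p.eval z) w₁
      linarith
    have hw₁pK : w₁ ∉ (fun z : ℂ => p.eval z) '' K := by
      rintro ⟨z, hzK, hz⟩
      have hzfs : z ∈ fs := (hfs_mem z).2 hz
      exact hzK.2 (mem_biUnion hzfs (hzS z hz))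
    -- choose the radius r
    have hopen2 : IsOpen (N ∩ ((fun z : ℂ => p.eval z) '' K)ᶜ) :=
      hNopen.inter (hKcomp.image hpc).isClosed.isOpen_compl
    have hw₁2 : w₁ ∈ N ∩ ((fun z : ℂ => p.eval z) '' K)ᶜ := ⟨hw₁N, hw₁pK⟩
    obtain ⟨ε, hε, hball⟩ := Metric.isOpen_iff.1 hopen2 w₁ hw₁2
    set r : ℝ := min ε 1 with hr
    have hrpos : 0 < r := lt_min hε one_pos
    have hr1 : r ≤ 1 := min_le_right _ _
    have hballN : Metric.ball w₁ r ⊆ N ∩ ((fun z : ℂ => p.eval z) '' K)ᶜ :=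
      (Metric.ball_subset_ball (min_le_left _ _)).trans hball
    -- coverage of preimages of the small ball by local charts
    have hcover : ∀ z : ℂ, p.eval z ∈ Metric.ball w₁ r → z ∈ ⋃ z' ∈ fs, S z' := by
      intro z hz
      by_contra hzn
      have hzK : z ∈ K := by
        refine ⟨?_, hzn⟩
        have : dist (p.eval z) w₁ < r := Metric.mem_ball.1 hz
        exact Metric.mem_closedBall.2 (le_trans this.le hr1)
      have : p.eval z ∈ (fun z : ℂ => p.eval z) '' K := ⟨z, hzK, rfl⟩
      exact (hballN hz).2 this
    -- the closed pieces for the Baire argument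
    set D : Set ℂ := Metric.closedBall w₁ (r / 2) with hD
    have hDsub : D ⊆ Metric.ball w₁ r := by
      intro w hw
      have := Metric.mem_closedBall.1 hw
      exact Metric.mem_ball.2 (lt_of_le_of_lt this (by linarith))
    have hDT : ∀ z ∈ fs, D ⊆ T z := by
      intro z hz w hw
      have hwN : w ∈ N := (hballN (hDsub hw)).1
      have := hwN.2
      simp only [mem_iInter] at this
      exact this z hz
    set pY : Set ℂ := (fun z => p.eval z) '' Y with hpY
    set T' : ℂ → Set ℂ := fun z => (D ∩ pY) ∩ s z ⁻¹' X with hT'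
    have hT'closed : ∀ z ∈ fs, IsClosed (T' z) := by
      intro z hz
      have h1 : ContinuousOn (s z) (D ∩ pY) :=
        (hscont z ((hfs_mem z).1 hz)).mono ((inter_subset_left).trans (hDT z hz))
      exact h1.preimage_isClosed_of_isClosed
        (Metric.isClosed_closedBall.inter (hYcomp.image hpc).isClosed) hXcl
    -- apply the finite Baire lemma on the ball of radius r/2
    have hΩ₀ne : (Metric.ball w₁ (r / 2) ∩ pY).Nonempty :=
      ⟨w₁, Metric.mem_ball_self (by linarith), hw₁pY⟩
    have hΩ₀sub : Metric.ball w₁ (r / 2) ∩ pY ⊆ ⋃ z ∈ fs, T' z := by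
      rintro w ⟨hwball, hwpY⟩
      have hwD : w ∈ D := Metric.ball_subset_closedBall hwball
      have hwr : w ∈ Metric.ball w₁ r := hDsub hwD
      have hwV : w ∈ V := (hballN hwr).1.1
      have hwpX : w ∈ (fun z => p.eval z) '' X := hVsub ⟨hwV, hwpY⟩
      obtain ⟨x, hxX, hpx⟩ := hwpX
      have hpx' : Polynomial.eval x p = w := hpx
      have hxcov : x ∈ ⋃ z' ∈ fs, S z' := hcover x (by rw [hpx']; exact hwr)
      simp only [mem_iUnion, exists_prop] at hxcov
      obtain ⟨z, hzfs, hxS⟩ := hxcov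
      have hzw := (hfs_mem z).1 hzfs
      have hwT' : w ∈ T z := hDT z hzfs hwD
      have hxs : x = s z w := hinj z hzw x hxS w hwT' hpx'
      refine mem_biUnion hzfs ?_
      exact ⟨⟨hwD, hwpY⟩, show s z w ∈ X from hxs ▸ hxX⟩
    obtain ⟨z, hzfs, Ω', hΩ'open, hΩ'ne, hΩ'sub⟩ :=
      finite_baire fs T' pY hT'closed (Metric.ball w₁ (r / 2)) Metric.isOpen_ball
        hΩ₀ne hΩ₀sub
    have hzw := (hfs_mem z).1 hzfs
    -- derive the contradiction with nowhere density of X in Y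
    set G : Set ℂ := S z ∩ (fun z : ℂ => p.eval z) ⁻¹' Ω' with hG
    have hGopen : IsOpen G := (hSopen z hzw).inter (hΩ'open.preimage hpc)
    have hGsub : G ∩ Y ⊆ X := by
      rintro u ⟨⟨huS, hupre⟩, huY⟩
      have hwU : p.eval u ∈ Ω' ∩ pY := ⟨hupre, ⟨u, huY, rfl⟩⟩
      have hwT' := hΩ'sub hwU
      have hwD : p.eval u ∈ D := hwT'.1.1
      have hsX : s z (p.eval u) ∈ X := hwT'.2
      have : u = s z (p.eval u) := hinj z hzw u huS (p.eval u) (hDT z hzfs hwD) rfl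
      rw [this]; exact hsX
    have hGne : (G ∩ Y).Nonempty := by
      obtain ⟨w, hwΩ', hwpY2⟩ := hΩ'ne
      have hwT' := hΩ'sub ⟨hwΩ', hwpY2⟩
      have hwD : w ∈ D := hwT'.1.1
      have hsX : s z w ∈ X := hwT'.2
      have hTz : w ∈ T z := hDT z hzfs hwD
      obtain ⟨hps, hsS⟩ := hsect z hzw w hTz
      refine ⟨s z w, ⟨hsS, ?_⟩, hXY hsX⟩
      show Polynomial.eval (s z w) p ∈ Ω'
      rw [hps]; exact hwΩ'
    exact hX G hGopen hGsub hGne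
  · -- Degenerate case: V ∩ p(Y) consists of critical values, hence is finite.
    push_neg at hreg
    set pY : Set ℂ := (fun z => p.eval z) '' Y with hpY
    have hFsub : V ∩ pY ⊆ CV := fun w hw => hreg w hw
    have hFfin : (V ∩ pY).Finite := hCVfin.subset hFsub
    obtain ⟨x, hxX, hpx⟩ := hVsub ⟨hw₀V, hw₀pY⟩
    -- shrink V so that it meets pY only in w₀
    have hF'cl : IsClosed ((V ∩ pY) \ {w₀}) := (hFfin.subset diff_subset).isClosed
    have hw₀F' : w₀ ∉ (V ∩ pY) \ {w₀} := fun h => h.2 rfl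
    set V₂ : Set ℂ := V ∩ ((V ∩ pY) \ {w₀})ᶜ with hV₂
    have hV₂open : IsOpen V₂ := hV.inter hF'cl.isOpen_compl
    have hw₀V₂ : w₀ ∈ V₂ := ⟨hw₀V, hw₀F'⟩
    have hV₂sub : V₂ ∩ pY ⊆ {w₀} := by
      rintro w ⟨⟨hwV, hwc⟩, hwpY⟩
      by_contra hww₀
      exact hwc ⟨⟨hwV, hwpY⟩, hww₀⟩
    -- remove the other points of the fiber over w₀
    have hEcl : IsClosed ({z : ℂ | p.eval z = w₀} \ {x}) :=
      ((hfibfin w₀).subset diff_subset).isClosed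
    set H : Set ℂ := (fun z : ℂ => p.eval z) ⁻¹' V₂ ∩ ({z : ℂ | p.eval z = w₀} \ {x})ᶜ
      with hH
    have hHopen : IsOpen H := (hV₂open.preimage hpc).inter hEcl.isOpen_compl
    have hHsub : H ∩ Y ⊆ X := by
      rintro u ⟨⟨hupre, huE⟩, huY⟩
      have : p.eval u ∈ V₂ ∩ pY := ⟨hupre, ⟨u, huY, rfl⟩⟩
      have hpu : p.eval u = w₀ := hV₂sub this
      have : u = x := by
        by_contra hux
        exact huE ⟨hpu, hux⟩
      rw [this]; exact hxX
    have hHne : (H ∩ Y).Nonempty := by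
      have hpx' : Polynomial.eval x p = w₀ := hpx
      refine ⟨x, ⟨?_, ?_⟩, hXY hxX⟩
      · show Polynomial.eval x p ∈ V₂
        rw [hpx']; exact hw₀V₂
      · intro h; exact h.2 rfl
    exact hX H hHopen hHsub hHne
end

section
/- Let X be a continuum that is irreducible about a nonempty finite set A ⊆ X. Let Y ⊆ X be a subcontinuum with nonempty interior relative to X, and let m : Y → S¹ be a continuous surjection onto the unit circle S¹ = {z ∈ ℂ : |z| = 1} such that the preimage under m of every closed connected subset of S¹ is connected. Let B ⊆ Y be a finite set such that A ∩ Y ⊆ B and such that B intersects the closure of every connected component of X ∖ Y. Then m⁻¹(m(B)) has nonempty interior relative to X. -/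
open Set Topology

/-- For a finite nonempty set `C` on the circle and a point `z ∉ C`, there is a closed
connected subset (a closed arc) containing `C` and avoiding `z`. -/
lemma exists_closed_arc {C : Set Circle} (hC : C.Finite) (hne : C.Nonempty) {z : Circle}
    (hz : z ∉ C) : ∃ J : Set Circle, IsClosed J ∧ IsConnected J ∧ C ⊆ J ∧ z ∉ J := by
  classical
  set π := Real.pi with hπ
  have hπpos : 0 < π := Real.pi_pos
  have key' : ∀ c : Circle, ∃ θ : ℝ, c ∈ C → 0 < θ ∧ θ < 2 * π ∧ z * Circle.exp θ = c := by
    intro c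
    by_cases hc : c ∈ C
    · have hcz : c ≠ z := fun h => hz (h ▸ hc)
      set a := Complex.arg ((c / z : Circle) : ℂ) with ha
      have hw : Circle.exp a = c / z := Circle.exp_arg _
      have hane : a ≠ 0 := by
        intro h
        rw [h, Circle.exp_zero] at hw
        exact hcz (div_eq_one.mp hw.symm)
      have hlb : -π < a := Complex.neg_pi_lt_arg _
      have hub : a ≤ π := Complex.arg_le_pi _
      have hzc : z * (c / z) = c := mul_div_cancel z c
      by_cases hpos : 0 < a
      · exact ⟨a, fun _ => ⟨hpos, by linarith, by rw [hw, hzc]⟩⟩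
      · have hneg : a < 0 := lt_of_le_of_ne (not_lt.mp hpos) hane
        exact ⟨a + 2 * π, fun _ => ⟨by linarith, by linarith,
          by rw [Circle.exp_add_two_pi, hw, hzc]⟩⟩
    · exact ⟨1, fun h => absurd h hc⟩
  choose t key using key'
  obtain ⟨c₀, hc₀⟩ := hne
  have hne' : hC.toFinset.Nonempty := ⟨c₀, hC.mem_toFinset.mpr hc₀⟩
  set ε : ℝ := hC.toFinset.inf' hne' (fun c => min (t c) (2 * π - t c)) with hε
  have hεpos : 0 < ε := by
    rw [hε, Finset.lt_inf'_iff]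
    intro c hc
    obtain ⟨h1, h2, _⟩ := key c (hC.mem_toFinset.mp hc)
    exact lt_min h1 (by linarith)
  have hεle : ∀ c ∈ C, ε ≤ t c ∧ t c ≤ 2 * π - ε := by
    intro c hc
    have h := Finset.inf'_le (fun c => min (t c) (2 * π - t c)) (hC.mem_toFinset.mpr hc)
    rw [← hε] at h
    exact ⟨h.trans (min_le_left _ _), by have := h.trans (min_le_right _ _); linarith⟩
  have hεπ : ε ≤ π := by
    obtain ⟨h1, h2⟩ := hεle c₀ hc₀
    by_cases h : t c₀ ≤ π
    · linarith
    · linarith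
  refine ⟨(fun θ => z * Circle.exp θ) '' Icc ε (2 * π - ε), ?_, ?_, ?_, ?_⟩
  · exact ((isCompact_Icc.image (continuous_const.mul Circle.exp.continuous)).isClosed)
  · exact (isConnected_Icc (by linarith)).image _
      (continuous_const.mul Circle.exp.continuous).continuousOn
  · intro c hc
    obtain ⟨h1, h2⟩ := hεle c hc
    exact ⟨t c, ⟨h1, h2⟩, (key c hc).2.2⟩
  · rintro ⟨θ, ⟨hθ1, hθ2⟩, hθ⟩
    have h1 : Circle.exp θ = Circle.exp 0 := by
      rw [Circle.exp_zero]
      exact mul_left_cancel (hθ.trans (mul_one z).symm)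
    obtain ⟨n, hn⟩ := Circle.exp_eq_exp.mp h1
    rw [zero_add] at hn
    have h2 : (0 : ℝ) < n * (2 * π) := by rw [← hn]; linarith
    have h3 : (n : ℝ) * (2 * π) < 2 * π := by rw [← hn]; linarith
    have h4 : (0 : ℝ) < (n : ℝ) := by
      by_contra h
      nlinarith
    have h5 : (n : ℝ) < 1 := by
      by_contra h
      nlinarith
    have h6 : (0 : ℤ) < n := by exact_mod_cast h4
    have h7 : n < 1 := by exact_mod_cast h5
    omega

/-- Let `X` be a continuum irreducible about a nonempty finite set
`A ⊆ X`.  Let `Y ⊆ X` be a subcontinuum with nonempty interior, and let `m : Y → S¹`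
be a continuous monotone surjection onto the circle (preimages of closed connected
subsets are connected).  Let `B ⊆ Y` be a finite set with `A ∩ Y ⊆ B` that meets the
closure of every connected component of `X \ Y`.  Then `m⁻¹(m(B))` has nonempty
interior in `X`. -/
theorem stmt_8 (X : Type*) [MetricSpace X] [CompactSpace X] [ConnectedSpace X]
    [Nonempty X]
    (A : Set X) (hAfin : A.Finite) (hAne : A.Nonempty)
    (hirr : ∀ K : Set X, IsCompact K → IsConnected K → A ⊆ K → K = Set.univ)
    (Y : Set X) (hYcomp : IsCompact Y) (hYconn : IsConnected Y)
    (hYint : (interior Y).Nonempty)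
    (m : Y → Circle) (hmcont : Continuous m) (hmsurj : Function.Surjective m)
    (hmono : ∀ S : Set Circle, IsClosed S → IsConnected S → IsConnected (m ⁻¹' S))
    (B : Set X) (hBY : B ⊆ Y) (hBfin : B.Finite) (hAB : A ∩ Y ⊆ B)
    (hBcomp : ∀ x ∈ Yᶜ, (B ∩ closure (connectedComponentIn Yᶜ x)).Nonempty) :
    (interior (Subtype.val '' (m ⁻¹' (m '' ((↑) ⁻¹' B : Set Y))))).Nonempty := by
  classical
  set C : Set Circle := m '' ((↑) ⁻¹' B : Set Y) with hC
  -- B is nonempty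
  have hBne : B.Nonempty := by
    obtain ⟨a, ha⟩ := hAne
    by_cases haY : a ∈ Y
    · exact ⟨a, hAB ⟨ha, haY⟩⟩
    · obtain ⟨b, hb, _⟩ := hBcomp a haY
      exact ⟨b, hb⟩
  have hCfin : C.Finite := (hBfin.preimage (Subtype.val_injective.injOn)).image m
  have hCne : C.Nonempty := by
    obtain ⟨b, hb⟩ := hBne
    exact ⟨m ⟨b, hBY hb⟩, ⟨b, hBY hb⟩, hb, rfl⟩
  -- main case split
  by_cases hcase : ∀ x, ∀ hx : x ∈ interior Y, m ⟨x, interior_subset hx⟩ ∈ C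
  · -- interior Y is contained in the target set
    obtain ⟨x, hx⟩ := hYint
    refine ⟨x, interior_maximal ?_ isOpen_interior hx⟩
    intro u hu
    exact ⟨⟨u, interior_subset hu⟩, hcase u hu, rfl⟩
  · push_neg at hcase
    obtain ⟨x, hx, hxC⟩ := hcase
    exfalso
    obtain ⟨J, hJcl, hJconn, hCJ, hzJ⟩ := exists_closed_arc hCfin hCne hxC
    set L : Set X := Subtype.val '' (m ⁻¹' J) with hL
    have hLconn : IsConnected L :=
      (hmono J hJcl hJconn).image _ continuous_subtype_val.continuousOn
    have hLY : L ⊆ Y := by rintro u ⟨⟨u, hu⟩, _, rfl⟩; exact hu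
    have hBL : B ⊆ L := by
      intro b hb
      exact ⟨⟨b, hBY hb⟩, hCJ ⟨⟨b, hBY hb⟩, hb, rfl⟩, rfl⟩
    set M : Set X := L ∪ Yᶜ with hM
    set N : Set X := closure M with hN
    -- x ∉ N
    have hxN : x ∉ N := by
      have hopen : IsOpen (m ⁻¹' Jᶜ) := hJcl.isOpen_compl.preimage hmcont
      obtain ⟨O, hO, hOeq⟩ := isOpen_induced_iff.mp hopen
      have hxO : x ∈ interior Y ∩ O := by
        refine ⟨hx, ?_⟩
        have : (⟨x, interior_subset hx⟩ : Y) ∈ ((↑) ⁻¹' O : Set Y) := by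
          rw [hOeq]; exact hzJ
        exact this
      have hMsub : M ⊆ (interior Y ∩ O)ᶜ := by
        rintro u huM ⟨huY, huO⟩
        rcases huM with huL | huc
        · obtain ⟨⟨v, hv⟩, hvJ, rfl⟩ := huL
          have : (⟨v, hv⟩ : Y) ∈ ((↑) ⁻¹' O : Set Y) := huO
          rw [hOeq] at this
          exact this hvJ
        · exact huc (interior_subset huY)
      have hclsub : closure M ⊆ (interior Y ∩ O)ᶜ :=
        closure_minimal hMsub (isOpen_interior.inter hO).isClosed_compl
      exact fun hmem => hclsub hmem hxO
    -- A ⊆ N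
    have hAN : A ⊆ N := by
      intro a ha
      apply subset_closure
      by_cases haY : a ∈ Y
      · exact Or.inl (hBL (hAB ⟨ha, haY⟩))
      · exact Or.inr haY
    -- N is connected
    obtain ⟨b₀, hb₀⟩ := hBne
    have hb₀L : b₀ ∈ L := hBL hb₀
    set c : Set (Set X) := insert L ((fun x => L ∪ closure (connectedComponentIn Yᶜ x)) '' Yᶜ)
      with hc
    have hPconn : IsPreconnected (⋃₀ c) := by
      apply isPreconnected_sUnion b₀
      · rintro s (rfl | ⟨u, hu, rfl⟩)
        · exact hb₀L
        · exact Or.inl hb₀L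
      · rintro s (rfl | ⟨u, hu, rfl⟩)
        · exact hLconn.isPreconnected
        · have hcomp : IsConnected (connectedComponentIn Yᶜ u) :=
            isConnected_connectedComponentIn_iff.mpr hu
          obtain ⟨b, hbB, hbcl⟩ := hBcomp u hu
          exact (hLconn.union ⟨b, hBL hbB, hbcl⟩ hcomp.closure).isPreconnected
    have hMP : M ⊆ ⋃₀ c := by
      rintro u (huL | huc)
      · exact ⟨L, mem_insert _ _, huL⟩
      · exact ⟨L ∪ closure (connectedComponentIn Yᶜ u), Or.inr ⟨u, huc, rfl⟩,
          Or.inr (subset_closure (mem_connectedComponentIn huc))⟩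
    have hPM : ⋃₀ c ⊆ closure M := by
      rintro u ⟨s, hs, hus⟩
      rcases hs with rfl | ⟨v, hv, rfl⟩
      · exact subset_closure (Or.inl hus)
      · rcases hus with huL | hucl
        · exact subset_closure (Or.inl huL)
        · exact closure_mono (fun w hw => Or.inr (connectedComponentIn_subset _ _ hw)) hucl
    have hNconn : IsPreconnected N := by
      apply hPconn.subset_closure hPM
      calc closure M ⊆ closure (⋃₀ c) := closure_mono hMP
        _ = closure (⋃₀ c) := rfl
    have hNconn' : IsConnected N := ⟨⟨b₀, subset_closure (Or.inl hb₀L)⟩, hNconn⟩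
    have hNcomp : IsCompact N := isClosed_closure.isCompact
    have := hirr N hNcomp hNconn' hAN
    rw [this] at hxN
    exact hxN (mem_univ x)
end
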